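/- Let (G,σ,w) be a positive-connected signed graph on n vertices with consensus index ε₀, and let 0 < ε < ε₀. Then the node ε-repelling curvature satisfies, for every vertex i, τ_ε(i) = φ_ε·(1 − (1/2)·∑_{j:j∼i} (w_ij⁺ − ε·w_ij⁻)·Ω_ε(i,j)), where φ_ε = n·1ᵀΩ_ε⁻¹1. -/

import Mathlib

open Matrix BigOperators

open scoped Classical

/-- Moore–Penrose pseudoinverse of a square real matrix (chosen via the
defining Penrose equations; it is unique when it exists). -/
noncomputable def pinv {n : ℕ} (A : Matrix (Fin n) (Fin n) ℝ) : Matrix (Fin n) (Fin n) ℝ :=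
  if h : ∃ B : Matrix (Fin n) (Fin n) ℝ,
      A * B * A = A ∧ B * A * B = B ∧ (A * B)ᵀ = A * B ∧ (B * A)ᵀ = B * A
  then h.choose else 0

/-- The eigenvalues of a symmetric real matrix, sorted in nondecreasing order. -/
noncomputable def sortedEigs {n : ℕ} (A : Matrix (Fin n) (Fin n) ℝ) : List ℝ :=
  if h : A.IsHermitian then (Finset.univ.val.map h.eigenvalues).sort (· ≤ ·) else []

/-- The second smallest eigenvalue (with multiplicity) of a symmetric real matrix. -/
noncomputable def secondSmallestEig {n : ℕ} (A : Matrix (Fin n) (Fin n) ℝ) : ℝ :=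
  (sortedEigs A).getD 1 0

/-- The largest eigenvalue of a symmetric real matrix. -/
noncomputable def largestEig {n : ℕ} (A : Matrix (Fin n) (Fin n) ℝ) : ℝ :=
  (sortedEigs A).getD (n - 1) 0

/-- A signed weighted graph on `n` vertices, given by the positive-part and
negative-part weight functions (an edge carries a positive weight and a sign;
`wplus i j > 0` iff `(i,j)` is a positive edge, `wminus i j > 0` iff it is a
negative edge). -/
structure SignedGraph (n : ℕ) where
  wplus : Fin n → Fin n → ℝ
  wminus : Fin n → Fin n → ℝ
  wplus_symm : ∀ i j, wplus i j = wplus j i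
  wminus_symm : ∀ i j, wminus i j = wminus j i
  wplus_nonneg : ∀ i j, 0 ≤ wplus i j
  wminus_nonneg : ∀ i j, 0 ≤ wminus i j
  wplus_diag : ∀ i, wplus i i = 0
  wminus_diag : ∀ i, wminus i i = 0
  disjoint : ∀ i j, wplus i j = 0 ∨ wminus i j = 0

namespace SignedGraph

variable {n : ℕ} (Γ : SignedGraph n)

/-- positive degree -/
noncomputable def dplus (i : Fin n) : ℝ := ∑ j, Γ.wplus i j

/-- negative degree -/
noncomputable def dminus (i : Fin n) : ℝ := ∑ j, Γ.wminus i j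

/-- Laplacian of the positive subgraph -/
noncomputable def Lplus : Matrix (Fin n) (Fin n) ℝ :=
  Matrix.of fun i j => if i = j then Γ.dplus i else -Γ.wplus i j

/-- Laplacian of the negative subgraph -/
noncomputable def Lminus : Matrix (Fin n) (Fin n) ℝ :=
  Matrix.of fun i j => if i = j then Γ.dminus i else -Γ.wminus i j

/-- the ε-repelling Laplacian `L₊ - ε L₋` -/
noncomputable def Leps (ε : ℝ) : Matrix (Fin n) (Fin n) ℝ := Γ.Lplus - ε • Γ.Lminus

/-- the positive subgraph as a simple graph -/
def posGraph : SimpleGraph (Fin n) := SimpleGraph.fromRel (fun i j => 0 < Γ.wplus i j)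

/-- the negative subgraph as a simple graph -/
def negGraph : SimpleGraph (Fin n) := SimpleGraph.fromRel (fun i j => 0 < Γ.wminus i j)

/-- the underlying simple graph -/
def underlying : SimpleGraph (Fin n) :=
  SimpleGraph.fromRel (fun i j => 0 < Γ.wplus i j + Γ.wminus i j)

/-- the signed graph is positive-connected -/
def PosConnected : Prop := Γ.posGraph.Connected

/-- the signed graph is negative-connected -/
def NegConnected : Prop := Γ.negGraph.Connected

/-- the consensus index ε₀ -/
noncomputable def consensusIndex : ℝ :=
  sSup {ε : ℝ | 0 < ε ∧ (Γ.Leps ε).PosSemidef ∧ (Γ.Leps ε).rank = n - 1}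

/-- the ε-repelling cost Ω_ε(i,j) = (e_i - e_j)ᵀ L_ε† (e_i - e_j) -/
noncomputable def cost (ε : ℝ) (i j : Fin n) : ℝ :=
  (Pi.single i 1 - Pi.single j 1) ⬝ᵥ (pinv (Γ.Leps ε)) *ᵥ (Pi.single i 1 - Pi.single j 1)

/-- the ε-repelling matrix Ω_ε -/
noncomputable def costMatrix (ε : ℝ) : Matrix (Fin n) (Fin n) ℝ :=
  Matrix.of fun i j => Γ.cost ε i j

/-- the node ε-repelling curvature, the unique solution of Ω_ε τ_ε = n·1 -/
noncomputable def tau (ε : ℝ) : Fin n → ℝ :=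
  (Γ.costMatrix ε)⁻¹ *ᵥ (fun _ => (n : ℝ))

/-- φ_ε = n · 1ᵀ Ω_ε⁻¹ 1 -/
noncomputable def phi (ε : ℝ) : ℝ :=
  (n : ℝ) * ((fun _ => (1 : ℝ)) ⬝ᵥ ((Γ.costMatrix ε)⁻¹ *ᵥ fun _ => (1 : ℝ)))

/-- the quantity Λ_ε(i,j) appearing in the edge ε-repelling curvature -/
noncomputable def Lam (ε : ℝ) (i j : Fin n) : ℝ :=
  (Γ.dminus i + Γ.dminus j)
    - (∑ k, Γ.cost ε j k * Γ.wminus i k + ∑ k, Γ.cost ε i k * Γ.wminus j k) / Γ.cost ε i j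

/-- the edge ε-repelling curvature ϑ_ε(i,j) -/
noncomputable def edgeCurv (ε : ℝ) (i j : Fin n) : ℝ :=
  2 * (Γ.tau ε i + Γ.tau ε j) / Γ.cost ε i j + (1 + ε) * Γ.Lam ε i j

end SignedGraph

/-
For ε below the consensus index there is ε' > ε with L_{ε'} positive semidefinite. If L_ε x = 0 then
xᵀL₊x = ε·xᵀL₋x and xᵀL₊x ≥ ε'·xᵀL₋x, which forces xᵀL₋x = 0 and then xᵀL₊x = 0, so x is
constant on the connected positive subgraph. Hence ker L_ε is spanned by 1, the pseudoinverse
H = L_ε† satisfies H L_ε = I − J/n, and since H is symmetric, Ω_ε = g1ᵀ + 1gᵀ − 2H with g = diag H.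
The vector u with u_i = 1 + ½ ∑_j L_ε(i,j) Ω_ε(i,j) equals ½ L_ε g + 1/n, so 1ᵀu = 1 and Ω_ε u is a
multiple of 1. Therefore Ω_ε⁻¹ 1 = (1ᵀ Ω_ε⁻¹ 1) u, i.e. τ_ε = φ_ε u, and u is the claimed expression
because L_ε(i,j) = −(w⁺_ij − ε w⁻_ij) off the diagonal while Ω_ε(i,i) = 0.
-/

section MoorePenrose

variable {ι : Type*} [Fintype ι]

def Matrix.IsMoorePenroseInverse (A B : Matrix ι ι ℝ) : Prop :=
  A * B * A = A ∧ B * A * B = B ∧ (A * B)ᵀ = A * B ∧ (B * A)ᵀ = B * A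

namespace Matrix.IsMoorePenroseInverse

variable {A B C : Matrix ι ι ℝ}

theorem eq (hB : A.IsMoorePenroseInverse B) (hC : A.IsMoorePenroseInverse C) : B = C := by
  obtain ⟨hB1, hB2, hB3, hB4⟩ := hB
  obtain ⟨hC1, hC2, hC3, hC4⟩ := hC
  have hAB : A * B = A * C := by
    calc A * B = (A * C) * (A * B) := by rw [← Matrix.mul_assoc, hC1]
      _ = (A * C)ᵀ * (A * B)ᵀ := by rw [hC3, hB3]
      _ = A * C := by rw [← transpose_mul, ← Matrix.mul_assoc, hB1, hC3]
  have hBA : B * A = C * A := by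
    calc B * A = (B * A) * (C * A) := by rw [Matrix.mul_assoc, ← Matrix.mul_assoc A, hC1]
      _ = (B * A)ᵀ * (C * A)ᵀ := by rw [hB4, hC4]
      _ = C * A := by rw [← transpose_mul, Matrix.mul_assoc, ← Matrix.mul_assoc A, hB1, hC4]
  calc B = B * A * B := hB2.symm
    _ = C * A * C := by rw [hBA, Matrix.mul_assoc, hAB, ← Matrix.mul_assoc]
    _ = C := hC2

theorem transpose (hA : A.IsSymm) (hB : A.IsMoorePenroseInverse B) :
    A.IsMoorePenroseInverse Bᵀ := by
  obtain ⟨h1, h2, h3, h4⟩ := hB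
  replace hA : Aᵀ = A := hA
  refine ⟨?_, ?_, ?_, ?_⟩
  · conv_rhs => rw [← hA, ← h1]
    rw [transpose_mul, transpose_mul, hA, Matrix.mul_assoc]
  · conv_rhs => rw [← h2]
    rw [transpose_mul, transpose_mul, hA, Matrix.mul_assoc]
  · rw [transpose_mul, transpose_transpose, hA, ← h4, transpose_mul, hA]
  · rw [transpose_mul, transpose_transpose, hA, ← h3, transpose_mul, hA]

end Matrix.IsMoorePenroseInverse

theorem Matrix.IsHermitian.isMoorePenroseInverse_cfc_inv [DecidableEq ι] {A : Matrix ι ι ℝ}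
    (hA : A.IsHermitian) : A.IsMoorePenroseInverse (cfc (fun x : ℝ => x⁻¹) A) := by
  have hcont (f : ℝ → ℝ) : ContinuousOn f (spectrum ℝ A) := A.finite_real_spectrum.continuousOn f
  have hsymm (f : ℝ → ℝ) : (cfc f A)ᵀ = cfc f A := cfc_predicate f A
  have hmul (f g : ℝ → ℝ) : cfc f A * cfc g A = cfc (fun x => f x * g x) A :=
    (cfc_mul f g A (hcont f) (hcont g)).symm
  have hid : cfc (fun x : ℝ => x) A = A := cfc_id' ℝ A
  have hAB : A * cfc (fun x : ℝ => x⁻¹) A = cfc (fun x : ℝ => x * x⁻¹) A := by rw [← hmul, hid]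
  have hBA : cfc (fun x : ℝ => x⁻¹) A * A = cfc (fun x : ℝ => x⁻¹ * x) A := by rw [← hmul, hid]
  refine ⟨?_, ?_, by rw [hAB, hsymm], by rw [hBA, hsymm]⟩
  · calc A * cfc (fun x : ℝ => x⁻¹) A * A
        = cfc (fun x : ℝ => x * x⁻¹) A * cfc (fun x : ℝ => x) A := by rw [hAB, hid]
      _ = cfc (fun x : ℝ => x) A := by
        rw [hmul]
        exact cfc_congr fun x _ => by by_cases hx : x = 0 <;> simp [hx]
      _ = A := hid
  · rw [hBA, hmul]
    exact cfc_congr fun x _ => by by_cases hx : x = 0 <;> simp [hx]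

theorem pinv_isMoorePenroseInverse {n : ℕ} {A : Matrix (Fin n) (Fin n) ℝ} (hA : A.IsSymm) :
    A.IsMoorePenroseInverse (pinv A) := by
  have h : ∃ B, A.IsMoorePenroseInverse B :=
    ⟨_, (isHermitian_iff_isSymm.mpr hA).isMoorePenroseInverse_cfc_inv⟩
  unfold pinv
  split
  · exact Classical.choose_spec ‹_›
  · exact absurd h ‹_›

theorem isSymm_pinv {n : ℕ} {A : Matrix (Fin n) (Fin n) ℝ} (hA : A.IsSymm) : (pinv A).IsSymm :=
  ((pinv_isMoorePenroseInverse hA).transpose hA).eq (pinv_isMoorePenroseInverse hA)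

end MoorePenrose

section WeightedLaplacian

variable {ι : Type*} [Fintype ι] [DecidableEq ι] {w : ι → ι → ℝ}

def Matrix.weightedLaplacian (w : ι → ι → ℝ) : Matrix ι ι ℝ :=
  of fun i j => if i = j then ∑ k, w i k else -w i j

namespace Matrix

theorem weightedLaplacian_mulVec_apply (hdiag : ∀ i, w i i = 0) (x : ι → ℝ) (i : ι) :
    (weightedLaplacian w *ᵥ x) i = ∑ j, w i j * (x i - x j) := by
  have hrow (j : ι) : (if i = j then ∑ k, w i k else -w i j) * x j
      = (if i = j then (∑ k, w i k) * x j + w i j * x j else 0) - w i j * x j := by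
    by_cases h : i = j <;> simp [h]
  simp only [mulVec, dotProduct, weightedLaplacian, of_apply, hrow, Finset.sum_sub_distrib,
    Finset.sum_ite_eq, Finset.mem_univ, if_true, hdiag, zero_mul, add_zero, Finset.sum_mul,
    mul_sub]

theorem isSymm_weightedLaplacian (hsymm : ∀ i j, w i j = w j i) :
    (weightedLaplacian w).IsSymm := by
  refine IsSymm.ext fun i j => ?_
  by_cases h : i = j
  · simp [weightedLaplacian, h]
  · simp [weightedLaplacian, h, Ne.symm h, hsymm i j]

theorem dotProduct_weightedLaplacian_mulVec (hsymm : ∀ i j, w i j = w j i)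
    (hdiag : ∀ i, w i i = 0) (x : ι → ℝ) :
    x ⬝ᵥ weightedLaplacian w *ᵥ x = (1 / 2) * ∑ i, ∑ j, w i j * (x i - x j) ^ 2 := by
  have hswap : ∑ i, ∑ j, w i j * (x j * (x j - x i)) = ∑ i, ∑ j, w i j * (x i * (x i - x j)) := by
    rw [Finset.sum_comm]
    simp only [hsymm]
  have hsq : ∑ i, ∑ j, w i j * (x i - x j) ^ 2
      = ∑ i, ∑ j, w i j * (x i * (x i - x j)) + ∑ i, ∑ j, w i j * (x j * (x j - x i)) := by
    simp only [← Finset.sum_add_distrib]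
    exact Finset.sum_congr rfl fun i _ => Finset.sum_congr rfl fun j _ => by ring
  have hform : x ⬝ᵥ weightedLaplacian w *ᵥ x = ∑ i, ∑ j, w i j * (x i * (x i - x j)) := by
    simp only [dotProduct, weightedLaplacian_mulVec_apply hdiag, Finset.mul_sum]
    exact Finset.sum_congr rfl fun i _ => Finset.sum_congr rfl fun j _ => by ring
  rw [hsq, hswap, hform]
  ring

theorem dotProduct_weightedLaplacian_mulVec_nonneg (hw : ∀ i j, 0 ≤ w i j)
    (hsymm : ∀ i j, w i j = w j i) (hdiag : ∀ i, w i i = 0) (x : ι → ℝ) :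
    0 ≤ x ⬝ᵥ weightedLaplacian w *ᵥ x := by
  rw [dotProduct_weightedLaplacian_mulVec hsymm hdiag]
  have : 0 ≤ ∑ i, ∑ j, w i j * (x i - x j) ^ 2 := Finset.sum_nonneg fun i _ =>
    Finset.sum_nonneg fun j _ => mul_nonneg (hw i j) (sq_nonneg (x i - x j))
  linarith

theorem eq_of_dotProduct_weightedLaplacian_mulVec_eq_zero (hw : ∀ i j, 0 ≤ w i j)
    (hsymm : ∀ i j, w i j = w j i) (hdiag : ∀ i, w i i = 0) {x : ι → ℝ}
    (hx : x ⬝ᵥ weightedLaplacian w *ᵥ x = 0) {i j : ι} (hij : 0 < w i j) : x i = x j := by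
  have hterm (i j : ι) : 0 ≤ w i j * (x i - x j) ^ 2 := mul_nonneg (hw i j) (sq_nonneg _)
  rw [dotProduct_weightedLaplacian_mulVec hsymm hdiag] at hx
  have hzero : w i j * (x i - x j) ^ 2 = 0 := by
    have hsum := (Finset.sum_eq_zero_iff_of_nonneg fun i _ => Finset.sum_nonneg fun j _ =>
      hterm i j).mp (by linarith) i (Finset.mem_univ _)
    exact (Finset.sum_eq_zero_iff_of_nonneg fun j _ => hterm i j).mp hsum j (Finset.mem_univ _)
  have := (mul_eq_zero.mp hzero).resolve_left hij.ne'
  linarith [pow_eq_zero_iff (n := 2) two_ne_zero |>.mp this]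

theorem sum_weightedLaplacian_mul_of_diag_eq_zero {M : Matrix ι ι ℝ} {i : ι} (hM : M i i = 0) :
    ∑ j, weightedLaplacian w i j * M i j = -∑ j, w i j * M i j := by
  rw [← Finset.sum_neg_distrib]
  refine Finset.sum_congr rfl fun j _ => ?_
  by_cases h : i = j
  · subst h; simp [hM]
  · simp [weightedLaplacian, h]

end Matrix

end WeightedLaplacian

section KernelConst

variable {ι : Type*} [Fintype ι] {L H : Matrix ι ι ℝ}

namespace Matrix

structure IsSymmWithKerConst (L : Matrix ι ι ℝ) : Prop where
  isSymm : L.IsSymm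
  mulVec_eq_zero_iff : ∀ x, L *ᵥ x = 0 ↔ ∀ j k, x j = x k

theorem IsSymmWithKerConst.mulVec_one (hL : L.IsSymmWithKerConst) : L *ᵥ 1 = 0 :=
  (hL.mulVec_eq_zero_iff 1).mpr fun _ _ => rfl

theorem IsSymmWithKerConst.sum_mulVec (hL : L.IsSymmWithKerConst) (x : ι → ℝ) :
    ∑ j, (L *ᵥ x) j = 0 := by
  have h := congrArg (x ⬝ᵥ ·) hL.mulVec_one
  simp only [dotProduct_mulVec, ← mulVec_transpose, hL.isSymm.eq, dotProduct_zero] at h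
  simpa [dotProduct, mul_comm] using h

theorem IsMoorePenroseInverse.mul_comm_of_isSymm (h : L.IsMoorePenroseInverse H) (hL : L.IsSymm)
    (hH : H.IsSymm) : L * H = H * L := by
  rw [← h.2.2.1, transpose_mul, hL.eq, hH.eq]

theorem IsMoorePenroseInverse.mulVec_one (h : L.IsMoorePenroseInverse H)
    (hL : L.IsSymmWithKerConst) (hH : H.IsSymm) : H *ᵥ 1 = 0 := by
  calc H *ᵥ 1 = (H * (H * L)) *ᵥ 1 := by
        rw [← h.mul_comm_of_isSymm hL.isSymm hH, ← Matrix.mul_assoc, h.2.1]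
    _ = 0 := by rw [← mulVec_mulVec, ← mulVec_mulVec, hL.mulVec_one, mulVec_zero, mulVec_zero]

theorem IsMoorePenroseInverse.mul_mulVec (h : L.IsMoorePenroseInverse H)
    (hL : L.IsSymmWithKerConst) (hH : H.IsSymm) (x : ι → ℝ) :
    (H * L) *ᵥ x = x - ((Fintype.card ι : ℝ)⁻¹ * ∑ j, x j) • 1 := by
  set y := x - (H * L) *ᵥ x with hy
  have hLy : L *ᵥ y = 0 := by
    rw [hy, mulVec_sub, mulVec_mulVec, ← Matrix.mul_assoc, h.1, sub_self]
  have hsum : ∑ j, ((H * L) *ᵥ x) j = 0 := by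
    rw [← h.mul_comm_of_isSymm hL.isSymm hH, ← mulVec_mulVec]
    exact hL.sum_mulVec _
  have hyconst := (hL.mulVec_eq_zero_iff y).mp hLy
  ext j
  have : Nonempty ι := ⟨j⟩
  have hcard : (Fintype.card ι : ℝ) ≠ 0 := Nat.cast_ne_zero.mpr Fintype.card_ne_zero
  have hysum : ∑ k, x k = Fintype.card ι * y j := by
    calc ∑ k, x k = ∑ k, y k := by simp [hy, Finset.sum_sub_distrib, hsum]
      _ = Fintype.card ι * y j := by simp [Finset.sum_congr rfl fun k _ => hyconst k j]
  rw [hysum, hy]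
  field_simp
  simp

end Matrix

end KernelConst

section Resistance

variable {ι : Type*} [Fintype ι] [DecidableEq ι]

namespace Matrix

def resistance (H : Matrix ι ι ℝ) : Matrix ι ι ℝ :=
  of fun j k => (Pi.single j 1 - Pi.single k 1) ⬝ᵥ H *ᵥ (Pi.single j 1 - Pi.single k 1)

variable {L H : Matrix ι ι ℝ}

@[simp]
theorem resistance_apply_self (H : Matrix ι ι ℝ) (j : ι) : resistance H j j = 0 := by
  simp [resistance]

theorem resistance_apply_of_isSymm (hH : H.IsSymm) (j k : ι) :
    resistance H j k = H j j + H k k - 2 * H j k := by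
  simp only [resistance, mulVec_sub, mulVec_single, MulOpposite.op_one, one_smul, dotProduct_sub,
    sub_dotProduct, single_dotProduct, col_apply, one_mul, of_apply, hH.apply j k]
  ring

theorem resistance_eq_of_isSymm (hH : H.IsSymm) :
    resistance H = vecMulVec H.diag 1 + vecMulVec 1 H.diag - (2 : ℝ) • H := by
  ext j k
  simp [resistance_apply_of_isSymm hH]

noncomputable def resistanceCurvature (L H : Matrix ι ι ℝ) : ι → ℝ :=
  fun j => 1 + 1 / 2 * ∑ k, L j k * resistance H j k

theorem resistanceCurvature_eq (h : L.IsMoorePenroseInverse H) (hL : L.IsSymmWithKerConst)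
    (hH : H.IsSymm) :
    resistanceCurvature L H = (1 / 2 : ℝ) • (L *ᵥ H.diag) + (Fintype.card ι : ℝ)⁻¹ • 1 := by
  ext j
  have hrow : ∑ k, L j k = 0 := by simpa [mulVec, dotProduct] using congrFun hL.mulVec_one j
  have hLH : ∑ k, L j k * H j k = 1 - (Fintype.card ι : ℝ)⁻¹ := by
    have hdiag := congrFun (h.mul_mulVec hL hH (Pi.single j 1)) j
    rw [mulVec_single_one, col_apply, mul_apply] at hdiag
    simp only [Finset.sum_pi_single', Pi.sub_apply, Pi.single_eq_same, Finset.mem_univ, if_true,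
      Pi.smul_apply, Pi.one_apply, smul_eq_mul, mul_one] at hdiag
    rw [← hdiag]
    exact Finset.sum_congr rfl fun k _ => by rw [hL.isSymm.apply j k, mul_comm]
  simp only [resistanceCurvature, resistance_apply_of_isSymm hH, mul_sub, mul_add,
    Finset.sum_sub_distrib, Finset.sum_add_distrib, ← Finset.sum_mul, hrow,
    mul_left_comm _ (2 : ℝ), ← Finset.mul_sum, hLH]
  simp only [Pi.add_apply, Pi.smul_apply, mulVec, dotProduct, diag_apply, Pi.one_apply,
    smul_eq_mul]
  ring

theorem sum_resistanceCurvature [Nonempty ι] (h : L.IsMoorePenroseInverse H)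
    (hL : L.IsSymmWithKerConst) (hH : H.IsSymm) : ∑ j, resistanceCurvature L H j = 1 := by
  rw [resistanceCurvature_eq h hL hH]
  simp only [Pi.add_apply, Pi.smul_apply, smul_eq_mul, Pi.one_apply, mul_one,
    Finset.sum_add_distrib, ← Finset.mul_sum, hL.sum_mulVec, Finset.sum_const, Finset.card_univ,
    nsmul_eq_mul, mul_zero, zero_add]
  exact mul_inv_cancel₀ (Nat.cast_ne_zero.mpr Fintype.card_ne_zero)

theorem resistance_mulVec_resistanceCurvature [Nonempty ι] (h : L.IsMoorePenroseInverse H)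
    (hL : L.IsSymmWithKerConst) (hH : H.IsSymm) :
    resistance H *ᵥ resistanceCurvature L H
      = (H.diag ⬝ᵥ resistanceCurvature L H + (Fintype.card ι : ℝ)⁻¹ * ∑ j, H.diag j) • 1 := by
  have hHu : H *ᵥ resistanceCurvature L H
      = (1 / 2 : ℝ) • (H.diag - ((Fintype.card ι : ℝ)⁻¹ * ∑ j, H.diag j) • 1) := by
    rw [resistanceCurvature_eq h hL hH, mulVec_add, mulVec_smul, mulVec_smul, h.mulVec_one hL hH,
      mulVec_mulVec, h.mul_mulVec hL hH, smul_zero, add_zero]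
  have hsum : 1 ⬝ᵥ resistanceCurvature L H = 1 := by
    rw [one_dotProduct, sum_resistanceCurvature h hL hH]
  rw [resistance_eq_of_isSymm hH, sub_mulVec, add_mulVec, vecMulVec_mulVec, vecMulVec_mulVec,
    smul_mulVec, hHu, hsum]
  ext j
  simp

end Matrix

end Resistance

/-- If `A` is singular, Lean's `A⁻¹` is `0` and both sides vanish. -/
theorem Matrix.inv_mulVec_eq_smul_of_mulVec_eq_smul {ι K : Type*} [Fintype ι] [DecidableEq ι]
    [Field K] {A : Matrix ι ι K} {u v : ι → K} {c : K} (hAu : A *ᵥ u = c • v)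
    (hu : ∑ j, u j = 1) : A⁻¹ *ᵥ v = (∑ j, (A⁻¹ *ᵥ v) j) • u := by
  by_cases hA : IsUnit A.det
  · have hc : c ≠ 0 := by
      rintro rfl
      rw [zero_smul, ← mulVec_zero A,
        (mulVec_injective_iff_isUnit.mpr ((isUnit_iff_isUnit_det A).mpr hA)).eq_iff] at hAu
      simp [hAu] at hu
    have hinv : A⁻¹ *ᵥ v = c⁻¹ • u := by
      rw [← inv_smul_smul₀ hc v, ← hAu, mulVec_smul, mulVec_mulVec, nonsing_inv_mul _ hA,
        one_mulVec]
    simp [hinv, ← Finset.mul_sum, hu]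
  · simp [nonsing_inv_apply_not_isUnit _ hA]

namespace SignedGraph

open Matrix

variable {n : ℕ} (Γ : SignedGraph n)

theorem Lplus_eq : Γ.Lplus = weightedLaplacian Γ.wplus := rfl

theorem Lminus_eq : Γ.Lminus = weightedLaplacian Γ.wminus := rfl

theorem Leps_eq (ε : ℝ) :
    Γ.Leps ε = weightedLaplacian fun i j => Γ.wplus i j - ε * Γ.wminus i j := by
  ext i j
  by_cases h : i = j
  · simp [Leps, Lplus_eq, Lminus_eq, weightedLaplacian, h, Finset.mul_sum]
  · simp only [Leps, Lplus_eq, Lminus_eq, weightedLaplacian, smul_of, Matrix.sub_apply, of_apply,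
      h, ↓reduceIte, Pi.smul_apply, smul_eq_mul]
    ring

theorem cost_eq_resistance (ε : ℝ) (i j : Fin n) :
    Γ.cost ε i j = resistance (pinv (Γ.Leps ε)) i j := rfl

theorem costMatrix_eq_resistance (ε : ℝ) : Γ.costMatrix ε = resistance (pinv (Γ.Leps ε)) := rfl

theorem dotProduct_Leps_mulVec (ε : ℝ) (x : Fin n → ℝ) :
    x ⬝ᵥ Γ.Leps ε *ᵥ x = x ⬝ᵥ Γ.Lplus *ᵥ x - ε * (x ⬝ᵥ Γ.Lminus *ᵥ x) := by
  rw [Leps, sub_mulVec, smul_mulVec, dotProduct_sub, dotProduct_smul, smul_eq_mul]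

variable {Γ}

theorem PosConnected.eq_of_forall_wplus_pos (hpc : Γ.PosConnected) {x : Fin n → ℝ}
    (hx : ∀ i j, 0 < Γ.wplus i j → x i = x j) (j k : Fin n) : x j = x k := by
  obtain ⟨p⟩ := hpc.preconnected j k
  induction p with
  | nil => rfl
  | cons hadj _ ih =>
    rw [posGraph, SimpleGraph.fromRel_adj] at hadj
    rcases hadj.2 with hpos | hpos
    · exact (hx _ _ hpos).trans ih
    · exact (hx _ _ hpos).symm.trans ih

theorem PosConnected.Leps_mulVec_eq_zero_iff (hpc : Γ.PosConnected) {ε ε' : ℝ} (hεε' : ε < ε')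
    (hpsd : (Γ.Leps ε').PosSemidef) (x : Fin n → ℝ) :
    Γ.Leps ε *ᵥ x = 0 ↔ ∀ j k, x j = x k := by
  constructor
  · intro hx
    have hq := Γ.dotProduct_Leps_mulVec ε x
    rw [hx, dotProduct_zero] at hq
    have hq' := hpsd.dotProduct_mulVec_nonneg x
    rw [star_trivial, dotProduct_Leps_mulVec] at hq'
    have hplus := dotProduct_weightedLaplacian_mulVec_nonneg Γ.wplus_nonneg Γ.wplus_symm
      Γ.wplus_diag x
    have hminus := dotProduct_weightedLaplacian_mulVec_nonneg Γ.wminus_nonneg Γ.wminus_symm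
      Γ.wminus_diag x
    rw [← Lplus_eq] at hplus
    rw [← Lminus_eq] at hminus
    have hminus0 : x ⬝ᵥ Γ.Lminus *ᵥ x = 0 :=
      le_antisymm (le_of_mul_le_mul_left (by linarith) (sub_pos.mpr hεε')) hminus
    have hzero : x ⬝ᵥ Γ.Lplus *ᵥ x = 0 := by rwa [hminus0, mul_zero, sub_zero, eq_comm] at hq
    exact hpc.eq_of_forall_wplus_pos fun i j hij =>
      eq_of_dotProduct_weightedLaplacian_mulVec_eq_zero Γ.wplus_nonneg Γ.wplus_symm Γ.wplus_diag
        hzero hij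
  · intro hx
    ext i
    rw [Leps_eq, weightedLaplacian_mulVec_apply fun j => by simp [Γ.wplus_diag, Γ.wminus_diag]]
    exact Finset.sum_eq_zero fun j _ => by rw [hx i j, sub_self, mul_zero]

theorem PosConnected.isSymmWithKerConst_Leps (hpc : Γ.PosConnected) {ε ε' : ℝ} (hεε' : ε < ε')
    (hpsd : (Γ.Leps ε').PosSemidef) : (Γ.Leps ε).IsSymmWithKerConst := by
  refine ⟨?_, hpc.Leps_mulVec_eq_zero_iff hεε' hpsd⟩
  rw [Leps_eq]
  exact isSymm_weightedLaplacian fun i j => by rw [Γ.wplus_symm, Γ.wminus_symm]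

variable (Γ)

theorem exists_lt_posSemidef_Leps {ε : ℝ} (hε0 : 0 < ε) (hε : ε < Γ.consensusIndex) :
    ∃ ε', ε < ε' ∧ (Γ.Leps ε').PosSemidef := by
  have hne : {ε : ℝ | 0 < ε ∧ (Γ.Leps ε).PosSemidef ∧ (Γ.Leps ε).rank = n - 1}.Nonempty := by
    by_contra h
    rw [Set.not_nonempty_iff_eq_empty] at h
    rw [consensusIndex, h, Real.sSup_empty] at hε
    linarith
  obtain ⟨ε', hε', hlt⟩ := exists_lt_of_lt_csSup hne hε
  exact ⟨ε', hlt, hε'.2.1⟩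

theorem tau_eq_phi_smul [Nonempty (Fin n)] {ε : ℝ} (hL : (Γ.Leps ε).IsSymmWithKerConst) :
    Γ.tau ε = Γ.phi ε • resistanceCurvature (Γ.Leps ε) (pinv (Γ.Leps ε)) := by
  have hpinv := pinv_isMoorePenroseInverse hL.isSymm
  have hsymm := isSymm_pinv hL.isSymm
  have hinv := inv_mulVec_eq_smul_of_mulVec_eq_smul
    (resistance_mulVec_resistanceCurvature hpinv hL hsymm) (sum_resistanceCurvature hpinv hL hsymm)
  have hconst : (fun _ => (n : ℝ)) = (n : ℝ) • (1 : Fin n → ℝ) := by ext; simp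
  have hone : (fun _ : Fin n => (1 : ℝ)) = 1 := rfl
  rw [tau, phi, costMatrix_eq_resistance, hconst, hone, one_dotProduct, mulVec_smul]
  conv_lhs => rw [hinv]
  rw [smul_smul]

theorem resistanceCurvature_Leps (ε : ℝ) (i : Fin n) :
    resistanceCurvature (Γ.Leps ε) (pinv (Γ.Leps ε)) i
      = 1 - 1 / 2 * ∑ j, (Γ.wplus i j - ε * Γ.wminus i j) * Γ.cost ε i j := by
  have hL (j : Fin n) :
      Γ.Leps ε i j = weightedLaplacian (fun i j => Γ.wplus i j - ε * Γ.wminus i j) i j := by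
    rw [Leps_eq]
  simp only [resistanceCurvature, hL, cost_eq_resistance]
  rw [sum_weightedLaplacian_mul_of_diag_eq_zero (resistance_apply_self _ i)]
  ring

end SignedGraph

/-- explicit formula for the node ε-repelling curvature. -/
theorem stmt15 {n : ℕ} (Γ : SignedGraph n) (hpc : Γ.PosConnected)
    (ε : ℝ) (hε0 : 0 < ε) (hε : ε < Γ.consensusIndex) (i : Fin n) :
    Γ.tau ε i =
      Γ.phi ε *
        (1 - (1 / 2) * ∑ j : Fin n, (Γ.wplus i j - ε * Γ.wminus i j) * Γ.cost ε i j) := by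
  obtain ⟨ε', hεε', hpsd⟩ := Γ.exists_lt_posSemidef_Leps hε0 hε
  have : Nonempty (Fin n) := ⟨i⟩
  rw [Γ.tau_eq_phi_smul (hpc.isSymmWithKerConst_Leps hεε' hpsd), Pi.smul_apply, smul_eq_mul,
    Γ.resistanceCurvature_Leps]
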